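/- Let W ∈ L²(ℤ_p × ℤ_p), W_in ∈ L²(ℤ_p × ℤ_p), x ∈ L²(ℤ_p), and let φ : ℝ → ℝ be Lipschitz with constant L_φ and φ(0) = 0, with 0 < L_φ ‖W‖₂ < 1. For ξ ∈ L²(ℤ_p), let h(ξ) denote the unique solution in L²(ℤ_p) of h(u) = ∫_{ℤ_p} W(u,y) φ(h(y)) dμ(y) + ∫_{ℤ_p} W_in(u,y) x(y) dμ(y) + ξ(u). Then for all ξ₁, ξ₂ ∈ L²(ℤ_p), ‖h(ξ₁) − h(ξ₂)‖₂ ≤ (1 − L_φ ‖W‖₂)⁻¹ ‖ξ₁ − ξ₂‖₂; in particular the hidden state depends continuously on the bias ξ. -/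

import Mathlib

open MeasureTheory
open scoped NNReal ENNReal

noncomputable instance (p : ℕ) [Fact p.Prime] : MeasurableSpace ℤ_[p] := borel _
instance (p : ℕ) [Fact p.Prime] : BorelSpace ℤ_[p] := ⟨rfl⟩

/-- The normalized Haar measure on the compact additive group `ℤ_[p]`
(so that `padicHaar p Set.univ = 1`). -/
noncomputable def padicHaar (p : ℕ) [Fact p.Prime] : Measure ℤ_[p] :=
  Measure.addHaarMeasure (⊤ : TopologicalSpace.PositiveCompacts ℤ_[p])

/-!
Subtracting the two fixed-point equations cancels the input term and leaves
`h₁ - h₂ = T (φ ∘ h₁ - φ ∘ h₂) + (ξ₁ - ξ₂)`, where `T f u = ∫ W(u, y) f(y) dμ(y)`.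
Cauchy–Schwarz on each fibre followed by Tonelli gives the Hilbert–Schmidt bound
`‖T f‖₂ ≤ ‖W‖₂ ‖f‖₂`, and `φ` is `Lφ`-Lipschitz, so `N = ‖h₁ - h₂‖₂` satisfies
`N ≤ Lφ ‖W‖₂ N + ‖ξ₁ - ξ₂‖₂`. As `N < ∞` and `Lφ ‖W‖₂ < 1`, this rearranges to the claim.
-/

namespace MeasureTheory

variable {α β E : Type*} [MeasurableSpace α] [MeasurableSpace β] [NormedAddCommGroup E]
  {μ : Measure α} {ν : Measure β}

lemma eLpNorm_two_sq_eq_lintegral (f : α → E) :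
    eLpNorm f 2 μ ^ 2 = ∫⁻ x, ‖f x‖ₑ ^ 2 ∂μ := by
  simpa using eLpNorm_nnreal_pow_eq_lintegral (f := f) (μ := μ) (p := 2) two_ne_zero

lemma lintegral_eLpNorm_prodMk_left_sq [SFinite ν] {K : α × β → E}
    (hK : AEStronglyMeasurable K (μ.prod ν)) :
    ∫⁻ u, eLpNorm (fun y => K (u, y)) 2 ν ^ 2 ∂μ = eLpNorm K 2 (μ.prod ν) ^ 2 := by
  simp_rw [eLpNorm_two_sq_eq_lintegral]
  exact (lintegral_prod _ (hK.enorm.pow_const 2)).symm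

lemma MemLp.ae_memLp_prodMk_left [SFinite ν] {K : α × β → E} (hK : MemLp K 2 (μ.prod ν)) :
    ∀ᵐ u ∂μ, MemLp (fun y => K (u, y)) 2 ν := by
  have hmeas : AEMeasurable (fun u => eLpNorm (fun y => K (u, y)) 2 ν ^ 2) μ := by
    simp_rw [eLpNorm_two_sq_eq_lintegral]
    exact (hK.1.enorm.pow_const 2).lintegral_prod_right'
  have hfin : ∫⁻ u, eLpNorm (fun y => K (u, y)) 2 ν ^ 2 ∂μ ≠ ∞ := by
    rw [lintegral_eLpNorm_prodMk_left_sq hK.1]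
    exact ENNReal.pow_ne_top hK.2.ne
  filter_upwards [hK.1.prodMk_left, ae_lt_top' hmeas hfin] with u hu hlt
  exact ⟨hu, (ENNReal.pow_lt_top_iff.1 hlt).resolve_right two_ne_zero⟩

lemma enorm_integral_mul_le {g f : β → ℝ} (hg : AEStronglyMeasurable g ν)
    (hf : AEStronglyMeasurable f ν) :
    ‖∫ y, g y * f y ∂ν‖ₑ ≤ eLpNorm g 2 ν * eLpNorm f 2 ν := by
  have holder : eLpNorm (fun y => g y * f y) 1 ν ≤ eLpNorm g 2 ν * eLpNorm f 2 ν := by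
    simpa using eLpNorm_le_eLpNorm_mul_eLpNorm'_of_norm (p := 2) (q := 2) hg hf (· * ·) 1
      (.of_forall fun _ => by simp [norm_mul])
  rw [eLpNorm_one_eq_lintegral_enorm] at holder
  exact (enorm_integral_le_lintegral_enorm _).trans holder

theorem eLpNorm_integral_mul_le [SFinite ν] {K : α × β → ℝ} {f : β → ℝ}
    (hK : AEStronglyMeasurable K (μ.prod ν)) (hf : MemLp f 2 ν) :
    eLpNorm (fun u => ∫ y, K (u, y) * f y ∂ν) 2 μ ≤ eLpNorm K 2 (μ.prod ν) * eLpNorm f 2 ν := by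
  refine (ENNReal.pow_le_pow_left_iff two_ne_zero).1 ?_
  calc eLpNorm (fun u => ∫ y, K (u, y) * f y ∂ν) 2 μ ^ 2
      = ∫⁻ u, ‖∫ y, K (u, y) * f y ∂ν‖ₑ ^ 2 ∂μ := eLpNorm_two_sq_eq_lintegral _
    _ ≤ ∫⁻ u, eLpNorm (fun y => K (u, y)) 2 ν ^ 2 * eLpNorm f 2 ν ^ 2 ∂μ := by
        refine lintegral_mono_ae ?_
        filter_upwards [hK.prodMk_left] with u hu
        rw [← mul_pow]
        gcongr
        exact enorm_integral_mul_le hu hf.1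
    _ = (eLpNorm K 2 (μ.prod ν) * eLpNorm f 2 ν) ^ 2 := by
        rw [lintegral_mul_const' _ _ (ENNReal.pow_ne_top hf.2.ne),
          lintegral_eLpNorm_prodMk_left_sq hK, mul_pow]

lemma ae_integral_mul_sub [SFinite ν] {K : α × β → ℝ} {f g : β → ℝ} (hK : MemLp K 2 (μ.prod ν))
    (hf : MemLp f 2 ν) (hg : MemLp g 2 ν) :
    ∀ᵐ u ∂μ, ∫ y, K (u, y) * (f y - g y) ∂ν
      = ∫ y, K (u, y) * f y ∂ν - ∫ y, K (u, y) * g y ∂ν := by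
  filter_upwards [hK.ae_memLp_prodMk_left] with u hu
  simp_rw [mul_sub]
  exact integral_sub (hu.integrable_mul hf) (hu.integrable_mul hg)

end MeasureTheory

namespace LipschitzWith

variable {α : Type*} [MeasurableSpace α] {μ : Measure α} {φ : ℝ → ℝ} {L : ℝ≥0}

lemma memLp_comp [IsFiniteMeasure μ] {p : ℝ≥0∞} {f : α → ℝ} (hφ : LipschitzWith L φ)
    (hf : MemLp f p μ) : MemLp (fun x => φ (f x)) p μ := by
  have h₀ := (hφ.sub (LipschitzWith.const (φ 0))).comp_memLp (sub_self _) hf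
  convert h₀.add (memLp_const (φ 0)) using 1
  ext x
  simp

lemma eLpNorm_comp_sub_le (hφ : LipschitzWith L φ) (p : ℝ≥0∞) (f g : α → ℝ) :
    eLpNorm (fun x => φ (f x) - φ (g x)) p μ ≤ L * eLpNorm (fun x => f x - g x) p μ := by
  refine eLpNorm_le_nnreal_smul_eLpNorm_of_ae_le_mul' (.of_forall fun x => ?_) p
  simpa [edist_eq_enorm_sub] using hφ (f x) (g x)

end LipschitzWith

lemma ENNReal.le_inv_one_sub_mul_of_le_mul_add {a q b : ℝ≥0∞} (ha : a ≠ ∞) (hq : q < 1)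
    (h : a ≤ q * a + b) : a ≤ (1 - q)⁻¹ * b := by
  rw [← ENNReal.mul_le_iff_le_inv (tsub_pos_of_lt hq).ne' (ENNReal.sub_ne_top ENNReal.one_ne_top),
    ENNReal.sub_mul (fun _ _ => ha), one_mul, tsub_le_iff_right, add_comm]
  exact h

theorem eLpNorm_fixedPoint_sub_le {α : Type*} [MeasurableSpace α] {μ : Measure α}
    [IsFiniteMeasure μ] {W : α × α → ℝ} (hW : MemLp W 2 (μ.prod μ)) {φ : ℝ → ℝ} {L : ℝ≥0}
    (hφ : LipschitzWith L φ) (hlt : L * eLpNorm W 2 (μ.prod μ) < 1) {b ξ₁ ξ₂ h₁ h₂ : α → ℝ}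
    (hξ : AEStronglyMeasurable (fun u => ξ₁ u - ξ₂ u) μ) (hh₁ : MemLp h₁ 2 μ) (hh₂ : MemLp h₂ 2 μ)
    (hfix₁ : ∀ᵐ u ∂μ, h₁ u = ∫ y, W (u, y) * φ (h₁ y) ∂μ + b u + ξ₁ u)
    (hfix₂ : ∀ᵐ u ∂μ, h₂ u = ∫ y, W (u, y) * φ (h₂ y) ∂μ + b u + ξ₂ u) :
    eLpNorm (fun u => h₁ u - h₂ u) 2 μ
      ≤ (1 - L * eLpNorm W 2 (μ.prod μ))⁻¹ * eLpNorm (fun u => ξ₁ u - ξ₂ u) 2 μ := by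
  set Φ := fun y => φ (h₁ y) - φ (h₂ y)
  have hΦ : MemLp Φ 2 μ := (hφ.memLp_comp hh₁).sub (hφ.memLp_comp hh₂)
  have hdiff : (fun u => h₁ u - h₂ u)
      =ᵐ[μ] fun u => ∫ y, W (u, y) * Φ y ∂μ + (ξ₁ u - ξ₂ u) := by
    filter_upwards [hfix₁, hfix₂,
      ae_integral_mul_sub hW (hφ.memLp_comp hh₁) (hφ.memLp_comp hh₂)] with u e₁ e₂ e
    rw [e]
    linear_combination e₁ - e₂
  have hTΦ : AEStronglyMeasurable (fun u => ∫ y, W (u, y) * Φ y ∂μ) μ :=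
    (hW.1.mul hΦ.1.comp_snd).integral_prod_right'
  have hTΦ_le : eLpNorm (fun u => ∫ y, W (u, y) * Φ y ∂μ) 2 μ
      ≤ eLpNorm W 2 (μ.prod μ) * (L * eLpNorm (fun u => h₁ u - h₂ u) 2 μ) :=
    (eLpNorm_integral_mul_le hW.1 hΦ).trans (by gcongr; exact hφ.eLpNorm_comp_sub_le 2 h₁ h₂)
  refine ENNReal.le_inv_one_sub_mul_of_le_mul_add (hh₁.sub hh₂).eLpNorm_lt_top.ne hlt ?_
  calc eLpNorm (fun u => h₁ u - h₂ u) 2 μ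
      = eLpNorm (fun u => ∫ y, W (u, y) * Φ y ∂μ + (ξ₁ u - ξ₂ u)) 2 μ := eLpNorm_congr_ae hdiff
    _ ≤ eLpNorm (fun u => ∫ y, W (u, y) * Φ y ∂μ) 2 μ + eLpNorm (fun u => ξ₁ u - ξ₂ u) 2 μ :=
        eLpNorm_add_le hTΦ hξ one_le_two
    _ ≤ eLpNorm W 2 (μ.prod μ) * (L * eLpNorm (fun u => h₁ u - h₂ u) 2 μ)
          + eLpNorm (fun u => ξ₁ u - ξ₂ u) 2 μ := by gcongr
    _ = L * eLpNorm W 2 (μ.prod μ) * eLpNorm (fun u => h₁ u - h₂ u) 2 μ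
          + eLpNorm (fun u => ξ₁ u - ξ₂ u) 2 μ := by ring

instance (p : ℕ) [Fact p.Prime] : IsFiniteMeasure (padicHaar p) := by
  unfold padicHaar
  infer_instance

theorem stmt_6_general (p : ℕ) [Fact p.Prime]
    (W Win : ℤ_[p] × ℤ_[p] → ℝ) (x : ℤ_[p] → ℝ)
    (hW : MemLp W 2 ((padicHaar p).prod (padicHaar p)))
    (φ : ℝ → ℝ) (Lφ : ℝ≥0) (hφ : LipschitzWith Lφ φ)
    (hlt : (Lφ : ℝ≥0∞) * eLpNorm W 2 ((padicHaar p).prod (padicHaar p)) < 1)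
    (ξ₁ ξ₂ : ℤ_[p] → ℝ) (hξ₁ : MemLp ξ₁ 2 (padicHaar p)) (hξ₂ : MemLp ξ₂ 2 (padicHaar p))
    (h₁ h₂ : ℤ_[p] → ℝ) (hh₁ : MemLp h₁ 2 (padicHaar p)) (hh₂ : MemLp h₂ 2 (padicHaar p))
    (hfix₁ : ∀ᵐ u ∂(padicHaar p),
      h₁ u = ∫ y, W (u, y) * φ (h₁ y) ∂(padicHaar p)
          + ∫ y, Win (u, y) * x y ∂(padicHaar p) + ξ₁ u)
    (hfix₂ : ∀ᵐ u ∂(padicHaar p),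
      h₂ u = ∫ y, W (u, y) * φ (h₂ y) ∂(padicHaar p)
          + ∫ y, Win (u, y) * x y ∂(padicHaar p) + ξ₂ u) :
    eLpNorm (fun u => h₁ u - h₂ u) 2 (padicHaar p)
      ≤ (1 - (Lφ : ℝ≥0∞) * eLpNorm W 2 ((padicHaar p).prod (padicHaar p)))⁻¹
          * eLpNorm (fun u => ξ₁ u - ξ₂ u) 2 (padicHaar p) :=
  eLpNorm_fixedPoint_sub_le hW hφ hlt (hξ₁.sub hξ₂).1 hh₁ hh₂ hfix₁ hfix₂

/-- In the contraction regime, the hidden state depends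
`(1 − Lφ‖W‖₂)⁻¹`-Lipschitz-continuously on the bias `ξ`. -/
theorem stmt_6 (p : ℕ) [Fact p.Prime]
    (W Win : ℤ_[p] × ℤ_[p] → ℝ) (x : ℤ_[p] → ℝ)
    (hW : MemLp W 2 ((padicHaar p).prod (padicHaar p)))
    (hWin : MemLp Win 2 ((padicHaar p).prod (padicHaar p)))
    (hx : MemLp x 2 (padicHaar p))
    (φ : ℝ → ℝ) (Lφ : ℝ≥0) (hφ : LipschitzWith Lφ φ) (hφ0 : φ 0 = 0)
    (hpos : 0 < (Lφ : ℝ≥0∞) * eLpNorm W 2 ((padicHaar p).prod (padicHaar p)))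
    (hlt : (Lφ : ℝ≥0∞) * eLpNorm W 2 ((padicHaar p).prod (padicHaar p)) < 1)
    (ξ₁ ξ₂ : ℤ_[p] → ℝ) (hξ₁ : MemLp ξ₁ 2 (padicHaar p)) (hξ₂ : MemLp ξ₂ 2 (padicHaar p))
    (h₁ h₂ : ℤ_[p] → ℝ) (hh₁ : MemLp h₁ 2 (padicHaar p)) (hh₂ : MemLp h₂ 2 (padicHaar p))
    (hfix₁ : ∀ᵐ u ∂(padicHaar p),
      h₁ u = ∫ y, W (u, y) * φ (h₁ y) ∂(padicHaar p)
          + ∫ y, Win (u, y) * x y ∂(padicHaar p) + ξ₁ u)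
    (hfix₂ : ∀ᵐ u ∂(padicHaar p),
      h₂ u = ∫ y, W (u, y) * φ (h₂ y) ∂(padicHaar p)
          + ∫ y, Win (u, y) * x y ∂(padicHaar p) + ξ₂ u) :
    eLpNorm (fun u => h₁ u - h₂ u) 2 (padicHaar p)
      ≤ (1 - (Lφ : ℝ≥0∞) * eLpNorm W 2 ((padicHaar p).prod (padicHaar p)))⁻¹
          * eLpNorm (fun u => ξ₁ u - ξ₂ u) 2 (padicHaar p) :=
  stmt_6_general p W Win x hW φ Lφ hφ hlt ξ₁ ξ₂ hξ₁ hξ₂ h₁ h₂ hh₁ hh₂ hfix₁ hfix₂
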